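/- For every real b ≥ 1, V(b) ≥ 2b·((2⌊b⌋ + 2⌈√(2b) + {b}⌉ − 1)/(b + ⌊b⌋ + ⌈√(2b) + {b}⌉ − 1))², where {b} := b − ⌊b⌋ denotes the fractional part of b. -/
import Mathlib
open Finset


/-- `Nseq a b k` is the `k`-th term (indexed from 0) of the nondecreasing sequence listing,
with multiplicities, all numbers `m*a + n*b` with `m n : ℕ`; equivalently the least `t ≥ 0`
such that there are at least `k+1` pairs `(m,n)` with `m*a + n*b ≤ t`. -/
noncomputable def Nseq (a b : ℝ) (k : ℕ) : ℝ :=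
  sInf {t : ℝ | 0 ≤ t ∧ k + 1 ≤ {p : ℕ × ℕ | (p.1 : ℝ) * a + (p.2 : ℝ) * b ≤ t}.ncard}

/-- `Mseq c d k = min {m*c + n*d : (m+1)*(n+1) ≥ k+1}`. -/
noncomputable def Mseq (c d : ℝ) (k : ℕ) : ℝ :=
  sInf {t : ℝ | ∃ m n : ℕ, k + 1 ≤ (m + 1) * (n + 1) ∧ t = (m : ℝ) * c + (n : ℝ) * d}

/-- `dFun a b = inf {λ > 0 : N_k(1,a) ≤ λ M_k(1,b) for all k}`. -/
noncomputable def dFun (a b : ℝ) : ℝ :=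
  sInf {l : ℝ | 0 < l ∧ ∀ k : ℕ, Nseq 1 a k ≤ l * Mseq 1 b k}

/-- `Vfun b = inf {A : d(a,b) = √(a/(2b)) for all a ≥ A}`. -/
noncomputable def Vfun (b : ℝ) : ℝ :=
  sInf {A : ℝ | ∀ a : ℝ, A ≤ a → dFun a b = Real.sqrt (a / (2 * b))}



lemma count_mem_iff (a t : ℝ) (ha : 0 < a) (ht : 0 ≤ t) (m' n' : ℕ) :
    ((m' : ℝ) * 1 + (n' : ℝ) * a ≤ t) ↔
      (n' < ⌊t / a⌋₊ + 1 ∧ m' < ⌊t - (n' : ℝ) * a⌋₊ + 1) := by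
  constructor
  · intro h
    have hna : (n' : ℝ) * a ≤ t := by
      have : (0:ℝ) ≤ (m' : ℝ) * 1 := by positivity
      linarith
    have hn : (n' : ℝ) ≤ t / a := (le_div_iff₀ ha).2 hna
    have hm : (m' : ℝ) ≤ t - (n' : ℝ) * a := by linarith
    exact ⟨Nat.lt_succ_of_le (Nat.le_floor hn), Nat.lt_succ_of_le (Nat.le_floor hm)⟩
  · rintro ⟨hn, hm⟩
    have hn' : (n' : ℝ) ≤ t / a :=
      le_trans (Nat.cast_le.2 (Nat.lt_succ_iff.1 hn)) (Nat.floor_le (by positivity))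
    have hna : (n' : ℝ) * a ≤ t := (le_div_iff₀ ha).1 hn'
    have hm' : (m' : ℝ) ≤ t - (n' : ℝ) * a :=
      le_trans (Nat.cast_le.2 (Nat.lt_succ_iff.1 hm)) (Nat.floor_le (by linarith))
    linarith

lemma count_eq (a t : ℝ) (ha : 0 < a) (ht : 0 ≤ t) :
    {p : ℕ × ℕ | (p.1 : ℝ) * 1 + (p.2 : ℝ) * a ≤ t}.ncard
      = ∑ n' ∈ Finset.range (⌊t / a⌋₊ + 1), (⌊t - (n' : ℝ) * a⌋₊ + 1) := by
  classical
  have hset : {p : ℕ × ℕ | (p.1 : ℝ) * 1 + (p.2 : ℝ) * a ≤ t} =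
      ↑((Finset.range (⌊t / a⌋₊ + 1)).biUnion
        (fun n' => (Finset.range (⌊t - (n' : ℝ) * a⌋₊ + 1)).image (fun m' => (m', n')))) := by
    ext ⟨m', n'⟩
    simp only [Set.mem_setOf_eq, coe_biUnion, Set.mem_iUnion, mem_coe, mem_range, mem_image,
      Prod.mk.injEq]
    rw [count_mem_iff a t ha ht m' n']
    constructor
    · rintro ⟨h1, h2⟩
      exact ⟨n', h1, m', h2, rfl, rfl⟩
    · rintro ⟨j, hj, i, hi, rfl, rfl⟩
      exact ⟨hj, hi⟩
  rw [hset, Set.ncard_coe_finset]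
  rw [Finset.card_biUnion]
  · apply Finset.sum_congr rfl
    intro n' _
    rw [Finset.card_image_of_injective _ (fun x y h => by simpa using congrArg Prod.fst h),
      Finset.card_range]
  · intro i _ j _ hij
    simp only [Finset.disjoint_left, mem_image, mem_range]
    rintro ⟨m1, n1⟩ ⟨x, hx, h1⟩ ⟨y, hy, h2⟩
    apply hij
    have h3 : i = n1 := by simpa using congrArg Prod.snd h1
    have h4 : j = n1 := by simpa using congrArg Prod.snd h2
    rw [h3, h4]

section helpers
variable {a b t : ℝ} {k : ℕ}

lemma Nset_mem_nat (a : ℝ) (ha : 0 < a) (k : ℕ) :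
    ((k:ℝ)) ∈ {t : ℝ | 0 ≤ t ∧
      k + 1 ≤ {p : ℕ × ℕ | (p.1 : ℝ) * 1 + (p.2 : ℝ) * a ≤ t}.ncard} := by
  refine ⟨Nat.cast_nonneg k, ?_⟩
  rw [count_eq a (k:ℝ) ha (Nat.cast_nonneg k)]
  have h0 : 0 ∈ Finset.range (⌊(k:ℝ)/a⌋₊ + 1) := by simp
  have := Finset.single_le_sum (f := fun n' : ℕ => ⌊(k:ℝ) - (n':ℝ)*a⌋₊ + 1)
    (fun i _ => Nat.zero_le _) h0
  simpa using this

lemma Nseq_le' (a : ℝ) (k : ℕ) (t : ℝ) (ht : 0 ≤ t)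
    (h : k + 1 ≤ {p : ℕ × ℕ | (p.1 : ℝ) * 1 + (p.2 : ℝ) * a ≤ t}.ncard) :
    Nseq 1 a k ≤ t :=
  csInf_le ⟨0, fun _ hx => hx.1⟩ ⟨ht, by simpa using h⟩

lemma le_Nseq' (a : ℝ) (ha : 0 < a) (k : ℕ) (t0 : ℝ)
    (h : ∀ t, 0 ≤ t →
      k + 1 ≤ {p : ℕ × ℕ | (p.1 : ℝ) * 1 + (p.2 : ℝ) * a ≤ t}.ncard → t0 ≤ t) :
    t0 ≤ Nseq 1 a k :=
  le_csInf ⟨(k:ℝ), by simpa using Nset_mem_nat a ha k⟩ (fun t ht => h t ht.1 (by simpa using ht.2))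

lemma Mseq_le' (b : ℝ) (hb : 0 < b) (k m n : ℕ) (h : k + 1 ≤ (m+1)*(n+1)) :
    Mseq 1 b k ≤ (m:ℝ) * 1 + (n:ℝ) * b := by
  apply csInf_le
  · refine ⟨0, ?_⟩
    rintro x ⟨m', n', -, rfl⟩
    positivity
  · exact ⟨m, n, h, rfl⟩

end helpers

lemma gauss_real : ∀ N : ℕ, (∑ n' ∈ Finset.range N, (n':ℝ)) = N*(N-1)/2 := by
  intro N
  induction N with
  | zero => simp
  | succ n ih => rw [Finset.sum_range_succ, ih]; push_cast; ring

lemma core1 (b lam : ℝ) (hb : 1 ≤ b) (hlam : 4 ≤ lam) (m n k : ℕ)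
    (hk : k + 1 ≤ (m + 1) * (n + 1)) :
    Nseq 1 (2*b*lam^2) k ≤ lam * ((m:ℝ) * 1 + (n:ℝ) * b) := by
  have hb0 : (0:ℝ) < b := by linarith
  have hlam0 : (0:ℝ) < lam := by linarith
  set a := 2*b*lam^2 with ha_def
  have ha : 0 < a := by positivity
  set t := lam * ((m:ℝ) * 1 + (n:ℝ) * b) with ht_def
  have ht : 0 ≤ t := by positivity
  apply Nseq_le' a k t ht
  rw [count_eq a t ha ht]
  rcases Nat.eq_zero_or_pos (m + n) with hmn | hmn
  · have hm0 : m = 0 := by omega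
    have hn0 : n = 0 := by omega
    have hk0 : k = 0 := by
      subst hm0; subst hn0; omega
    subst hk0
    have h0 : 0 ∈ Finset.range (⌊t/a⌋₊ + 1) := by simp
    have h1 : ⌊t - ((0:ℕ):ℝ)*a⌋₊ + 1
        ≤ ∑ n' ∈ Finset.range (⌊t/a⌋₊+1), (⌊t - (n':ℝ)*a⌋₊ + 1) :=
      Finset.single_le_sum (f := fun n' : ℕ => ⌊t - (n':ℝ)*a⌋₊ + 1)
        (fun i _ => Nat.zero_le _) h0
    omega
  · set r := ⌊t/a⌋₊ + 1 with hr_def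
    have hrl : t/a < (r:ℝ) := by
      rw [hr_def]; push_cast
      exact Nat.lt_floor_add_one _
    have hru : (r:ℝ) ≤ t/a + 1 := by
      rw [hr_def]; push_cast
      have := Nat.floor_le (show (0:ℝ) ≤ t/a by positivity)
      linarith
    have hterm : ∀ n' ∈ Finset.range r, t - (n':ℝ)*a ≤ (⌊t - (n':ℝ)*a⌋₊ : ℝ) + 1 :=
      fun n' _ => (Nat.lt_floor_add_one _).le
    have h1 : ∑ n' ∈ Finset.range r, (t - (n':ℝ)*a)
        ≤ ∑ n' ∈ Finset.range r, ((⌊t - (n':ℝ)*a⌋₊:ℝ) + 1) :=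
      Finset.sum_le_sum hterm
    have h2 : ∑ n' ∈ Finset.range r, (t - (n':ℝ)*a) = r*t - a*((r:ℝ)*((r:ℝ)-1))/2 := by
      rw [Finset.sum_sub_distrib, Finset.sum_const, Finset.card_range,
        ← Finset.sum_mul, gauss_real r]
      push_cast
      ring
    have hdiff : ((m:ℝ)*n) ≤ t^2/(2*a) := by
      rw [le_div_iff₀ (by positivity)]
      rw [ht_def, ha_def]
      nlinarith [mul_nonneg (sq_nonneg lam) (sq_nonneg ((m:ℝ) - n*b))]
    have hmn1 : (1:ℝ) ≤ (m:ℝ) + n := by exact_mod_cast hmn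
    have hlin : (m:ℝ) + n + 1 ≤ t/2 := by
      rw [ht_def]
      nlinarith [mul_nonneg (by linarith : (0:ℝ) ≤ lam - 4)
          (by positivity : (0:ℝ) ≤ (m:ℝ)*1 + n*b),
        mul_nonneg (Nat.cast_nonneg n) (by linarith : (0:ℝ) ≤ b - 1)]
    have hg : (r:ℝ)*t - a*((r:ℝ)*((r:ℝ)-1))/2
        = t^2/(2*a) + t/2 + (a/2)*((r:ℝ) - t/a)*(t/a + 1 - r) := by
      field_simp
      ring
    have hpos : 0 ≤ (a/2)*(((r:ℝ) - t/a)*(t/a + 1 - r)) :=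
      mul_nonneg (by positivity) (mul_nonneg (by linarith) (by linarith))
    have key : ((m:ℝ)+1)*((n:ℝ)+1) ≤ ∑ n' ∈ Finset.range r, ((⌊t - (n':ℝ)*a⌋₊ : ℝ) + 1) := by
      rw [h2] at h1
      nlinarith [h1, hg, hpos, hdiff, hlin]
    have hnat : (m+1)*(n+1) ≤ ∑ n' ∈ Finset.range r, (⌊t - (n':ℝ)*a⌋₊ + 1) := by
      have hcast : ((m+1)*(n+1):ℝ)
          ≤ ((∑ n' ∈ Finset.range r, (⌊t - (n':ℝ)*a⌋₊ + 1) : ℕ) : ℝ) := by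
        push_cast
        exact key
      exact_mod_cast hcast
    omega


lemma sqrt_tendsto_atTop : Filter.Tendsto Real.sqrt Filter.atTop Filter.atTop := by
  apply Filter.tendsto_atTop_atTop.2
  intro C
  refine ⟨C^2, fun x hx => ?_⟩
  calc C ≤ |C| := le_abs_self C
    _ = Real.sqrt (C^2) := (Real.sqrt_sq_eq_abs C).symm
    _ ≤ Real.sqrt x := Real.sqrt_le_sqrt hx

lemma Mseq_upper (b : ℝ) (hb : 0 < b) (k : ℕ) :
    Mseq 1 b k ≤ 2 * Real.sqrt (b*((k:ℝ)+1)) := by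
  set x := Real.sqrt (((k:ℝ)+1)/b) with hx_def
  have hx0 : 0 < x := Real.sqrt_pos.2 (by positivity)
  set q := ⌈x⌉₊ with hq_def
  have hq1 : 1 ≤ q := Nat.one_le_ceil_iff.2 hx0
  have hqx : x ≤ (q:ℝ) := Nat.le_ceil x
  have hqx' : (q:ℝ) < x + 1 := Nat.ceil_lt_add_one hx0.le
  set n := q - 1 with hn_def
  set m := k / q with hm_def
  have hcons : k + 1 ≤ (m+1)*(n+1) := by
    have hnq : n + 1 = q := by omega
    rw [hnq, add_mul, one_mul]
    exact Nat.lt_div_mul_add (a := k) (b := q) (by omega)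
  have hs : Real.sqrt (b*((k:ℝ)+1)) * x = (k:ℝ)+1 := by
    rw [hx_def, ← Real.sqrt_mul (by positivity)]
    rw [show b*((k:ℝ)+1)*((((k:ℝ)+1))/b) = ((k:ℝ)+1)^2 by field_simp]
    exact Real.sqrt_sq (by positivity)
  have hmb : (m:ℝ) ≤ Real.sqrt (b*((k:ℝ)+1)) := by
    have h1 : (m:ℝ) ≤ (k:ℝ)/(q:ℝ) := Nat.cast_div_le
    have h2 : (k:ℝ)/(q:ℝ) ≤ (k:ℝ)/x :=
      div_le_div_of_nonneg_left (Nat.cast_nonneg k) hx0 hqx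
    have h4 : (k:ℝ)/x ≤ Real.sqrt (b*((k:ℝ)+1)) := by
      rw [div_le_iff₀ hx0]
      rw [hs]
      linarith
    linarith
  have hnb : (n:ℝ)*b ≤ Real.sqrt (b*((k:ℝ)+1)) := by
    have hn' : (n:ℝ) ≤ x := by
      have hcast : (n:ℝ) = (q:ℝ) - 1 := by
        rw [hn_def, Nat.cast_sub hq1]; norm_num
      linarith
    have h3 : x * b = Real.sqrt (b*((k:ℝ)+1)) := by
      have hb2 : x * b = Real.sqrt ((((k:ℝ)+1))/b) * Real.sqrt (b^2) := by
        rw [Real.sqrt_sq hb.le]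
      rw [hb2, ← Real.sqrt_mul (by positivity)]
      congr 1
      field_simp
    nlinarith
  calc Mseq 1 b k ≤ (m:ℝ)*1 + (n:ℝ)*b := Mseq_le' b hb k m n hcons
    _ ≤ 2 * Real.sqrt (b*((k:ℝ)+1)) := by linarith

lemma Nseq_lower (a : ℝ) (ha : 0 < a) (k : ℕ) :
    Real.sqrt (2*a*((k:ℝ)+1)) - 1 - a/2 ≤ Nseq 1 a k := by
  apply le_Nseq' a ha k
  intro t ht hcount
  rw [count_eq a t ha ht] at hcount
  set u := ⌊t/a⌋₊ with hu_def
  have hu : (u:ℝ) ≤ t/a := Nat.floor_le (by positivity)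
  have hterm : ∀ n' ∈ Finset.range (u+1), ((⌊t - (n':ℝ)*a⌋₊:ℝ) + 1) ≤ t - (n':ℝ)*a + 1 := by
    intro n' hn'
    have hn2 : (n':ℝ) ≤ (u:ℝ) := by
      exact_mod_cast Nat.lt_succ_iff.1 (Finset.mem_range.1 hn')
    have hnn : 0 ≤ t - (n':ℝ)*a := by
      have h1 : (n':ℝ)*a ≤ (u:ℝ)*a := by nlinarith
      have h2 : (u:ℝ)*a ≤ t := by
        rw [← le_div_iff₀ ha]; exact hu
      linarith
    have := Nat.floor_le hnn
    linarith
  have hsum : ((k:ℝ)+1) ≤ ∑ n' ∈ Finset.range (u+1), (t - (n':ℝ)*a + 1) := by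
    calc ((k:ℝ)+1) ≤ ((∑ n' ∈ Finset.range (u+1), (⌊t - (n':ℝ)*a⌋₊ + 1) : ℕ):ℝ) := by
          exact_mod_cast hcount
      _ = ∑ n' ∈ Finset.range (u+1), ((⌊t - (n':ℝ)*a⌋₊:ℝ) + 1) := by push_cast; rfl
      _ ≤ _ := Finset.sum_le_sum hterm
  have heval : ∑ n' ∈ Finset.range (u+1), (t - (n':ℝ)*a + 1)
      = ((u:ℝ)+1)*(t+1) - a*(((u:ℝ)+1)*(u:ℝ))/2 := by
    have h1 : ∑ n' ∈ Finset.range (u+1), (t - (n':ℝ)*a + 1)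
        = (u+1)*(t+1) - (∑ n' ∈ Finset.range (u+1), (n':ℝ))*a := by
      rw [Finset.sum_add_distrib, Finset.sum_sub_distrib, Finset.sum_const, Finset.sum_const,
        Finset.card_range, ← Finset.sum_mul]
      push_cast
      ring
    rw [h1, gauss_real (u+1)]
    push_cast
    ring
  have hkey : 2*a*((k:ℝ)+1) ≤ (t + 1 + a/2)^2 := by
    have h5 : (k:ℝ)+1 ≤ ((u:ℝ)+1)*(t+1) - a*(((u:ℝ)+1)*(u:ℝ))/2 := by
      rw [heval] at hsum; exact hsum
    nlinarith [sq_nonneg (t + 1 - a*(u:ℝ) - a/2), h5, ha]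
  have hfin : Real.sqrt (2*a*((k:ℝ)+1)) ≤ t + 1 + a/2 := by
    calc Real.sqrt (2*a*((k:ℝ)+1)) ≤ Real.sqrt ((t+1+a/2)^2) := Real.sqrt_le_sqrt hkey
      _ = t+1+a/2 := Real.sqrt_sq (by positivity)
  linarith

lemma sqrt_formula (a b : ℝ) (hb : 0 < b) (ha : 0 ≤ a) :
    Real.sqrt (a/(2*b)) = Real.sqrt (2*a) / (2*Real.sqrt b) := by
  have h4 : Real.sqrt ((2:ℝ)^2*b) = 2 * Real.sqrt b := by
    rw [Real.sqrt_mul (by norm_num), Real.sqrt_sq (by norm_num : (0:ℝ) ≤ 2)]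
  rw [← h4, ← Real.sqrt_div (by linarith : (0:ℝ) ≤ 2*a)]
  congr 1
  field_simp

lemma dFun_eq_of_large (a b : ℝ) (hb : 1 ≤ b) (ha : 32*b ≤ a) :
    dFun a b = Real.sqrt (a/(2*b)) := by
  have hb0 : (0:ℝ) < b := by linarith
  have ha0 : (0:ℝ) < a := by linarith
  set lam := Real.sqrt (a/(2*b)) with hlam_def
  have h16 : Real.sqrt 16 = 4 := by
    rw [show (16:ℝ) = 4^2 by norm_num]
    exact Real.sqrt_sq (by norm_num)
  have hlam4 : 4 ≤ lam := by
    rw [hlam_def, ← h16]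
    apply Real.sqrt_le_sqrt
    rw [le_div_iff₀ (by positivity)]
    linarith
  have hlam0 : (0:ℝ) < lam := by linarith
  have ha_eq : a = 2*b*lam^2 := by
    rw [hlam_def, Real.sq_sqrt (by positivity : (0:ℝ) ≤ a/(2*b))]
    field_simp
  have hall : ∀ k, Nseq 1 a k ≤ lam * Mseq 1 b k := by
    intro k
    have hMne : ∃ t, t ∈ {t : ℝ | ∃ m n : ℕ, k + 1 ≤ (m + 1) * (n + 1) ∧ t = (m:ℝ)*1 + (n:ℝ)*b} :=
      ⟨((k:ℕ):ℝ)*1 + ((0:ℕ):ℝ)*b, k, 0, by omega, rfl⟩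
    have hdiv : Nseq 1 a k / lam ≤ Mseq 1 b k := by
      apply le_csInf hMne
      rintro t ⟨m, n, hmn, rfl⟩
      rw [div_le_iff₀ hlam0]
      calc Nseq 1 a k = Nseq 1 (2*b*lam^2) k := by rw [← ha_eq]
        _ ≤ lam * ((m:ℝ)*1 + (n:ℝ)*b) := core1 b lam hb hlam4 m n k hmn
        _ = ((m:ℝ)*1 + (n:ℝ)*b) * lam := by ring
    calc Nseq 1 a k = (Nseq 1 a k / lam) * lam := by field_simp
      _ ≤ Mseq 1 b k * lam := mul_le_mul_of_nonneg_right hdiv hlam0.le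
      _ = lam * Mseq 1 b k := by ring
  apply le_antisymm
  · exact csInf_le ⟨0, fun l hl => hl.1.le⟩ ⟨hlam0, hall⟩
  · show lam ≤ sInf {l : ℝ | 0 < l ∧ ∀ k : ℕ, Nseq 1 a k ≤ l * Mseq 1 b k}
    refine le_csInf ?_ ?_
    · exact ⟨lam, ⟨hlam0, hall⟩⟩
    rintro l ⟨hl0, hl⟩
    have hk : ∀ k:ℕ, Real.sqrt (2*a)*Real.sqrt ((k:ℝ)+1) - 1 - a/2
        ≤ l * (2*Real.sqrt b*Real.sqrt ((k:ℝ)+1)) := by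
      intro k
      have h1 := Nseq_lower a ha0 k
      have h2 := hl k
      have h3 := Mseq_upper b hb0 k
      rw [Real.sqrt_mul hb0.le] at h3
      have h4 := mul_le_mul_of_nonneg_left h3 hl0.le
      rw [Real.sqrt_mul (by linarith : (0:ℝ) ≤ 2*a)] at h1
      nlinarith [h1, h2, h4]
    have hmain : ∀ k:ℕ, Real.sqrt (2*a)/(2*Real.sqrt b)
        - (1+a/2)/(2*Real.sqrt b*Real.sqrt ((k:ℝ)+1)) ≤ l := by
      intro k
      have hs : (0:ℝ) < Real.sqrt ((k:ℝ)+1) := Real.sqrt_pos.2 (by positivity)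
      have hsb : (0:ℝ) < Real.sqrt b := Real.sqrt_pos.2 hb0
      have heq : Real.sqrt (2*a)/(2*Real.sqrt b) - (1+a/2)/(2*Real.sqrt b*Real.sqrt ((k:ℝ)+1))
          = (Real.sqrt (2*a)*Real.sqrt ((k:ℝ)+1) - (1+a/2))/(2*Real.sqrt b*Real.sqrt ((k:ℝ)+1)) := by
        field_simp
      rw [heq, div_le_iff₀ (by positivity)]
      have h5 := hk k
      nlinarith [h5]
    have htend : Filter.Tendsto (fun k:ℕ => Real.sqrt (2*a)/(2*Real.sqrt b)
        - (1+a/2)/(2*Real.sqrt b*Real.sqrt ((k:ℝ)+1))) Filter.atTop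
        (nhds (Real.sqrt (2*a)/(2*Real.sqrt b))) := by
      have h1 : Filter.Tendsto (fun k:ℕ => ((k:ℝ)+1)) Filter.atTop Filter.atTop :=
        Filter.tendsto_atTop_add_const_right _ 1 tendsto_natCast_atTop_atTop
      have h2 : Filter.Tendsto (fun k:ℕ => Real.sqrt ((k:ℝ)+1)) Filter.atTop Filter.atTop :=
        sqrt_tendsto_atTop.comp h1
      have h3 : Filter.Tendsto (fun k:ℕ => 2*Real.sqrt b*Real.sqrt ((k:ℝ)+1))
          Filter.atTop Filter.atTop :=
        Filter.Tendsto.const_mul_atTop (by positivity : (0:ℝ) < 2*Real.sqrt b) h2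
      have h4 : Filter.Tendsto (fun k:ℕ => (1+a/2)/(2*Real.sqrt b*Real.sqrt ((k:ℝ)+1)))
          Filter.atTop (nhds 0) := Filter.Tendsto.div_atTop tendsto_const_nhds h3
      simpa using tendsto_const_nhds.sub h4
    have hfin := le_of_tendsto' htend hmain
    rw [hlam_def, sqrt_formula a b hb0 ha0.le]
    exact hfin

lemma counterexample (b a : ℝ) (hb : 1 ≤ b) (kbar : ℕ) (M0 : ℝ) (hM0 : 1 ≤ M0)
    (hMseq : Mseq 1 b kbar ≤ M0) (hk1 : 1 ≤ kbar) (hak : (kbar:ℝ) ≤ a)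
    (hlt : a < 2*b*((kbar:ℝ)/M0)^2) :
    dFun a b ≠ Real.sqrt (a/(2*b)) := by
  have hb0 : (0:ℝ) < b := by linarith
  have hkpos : (0:ℝ) < (kbar:ℝ) := by exact_mod_cast hk1
  have ha0 : (0:ℝ) < a := lt_of_lt_of_le hkpos hak
  have hM00 : (0:ℝ) < M0 := by linarith
  have hN : (kbar:ℝ) ≤ Nseq 1 a kbar := by
    apply le_Nseq' a ha0 kbar
    intro t ht hcount
    by_contra hcon
    push_neg at hcon
    have hta : t < a := lt_of_lt_of_le hcon hak
    have hu0 : ⌊t/a⌋₊ = 0 := Nat.floor_eq_zero.2 ((div_lt_one ha0).2 hta)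
    rw [count_eq a t ha0 ht, hu0] at hcount
    rw [Finset.sum_range_one] at hcount
    have h1 : ((⌊t - ((0:ℕ):ℝ)*a⌋₊:ℝ)) ≤ t := by
      have : t - ((0:ℕ):ℝ)*a = t := by push_cast; ring
      rw [this]
      exact Nat.floor_le ht
    have h2 : (kbar:ℝ) + 1 ≤ ((⌊t - ((0:ℕ):ℝ)*a⌋₊:ℝ)) + 1 := by exact_mod_cast hcount
    linarith
  intro heq
  rcases Set.eq_empty_or_nonempty
      {l : ℝ | 0 < l ∧ ∀ k : ℕ, Nseq 1 a k ≤ l * Mseq 1 b k} with hD | hD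
  · have h0 : dFun a b = 0 := by
      unfold dFun
      rw [hD]
      exact Real.sInf_empty
    have hpos := Real.sqrt_pos.2 (by positivity : (0:ℝ) < a/(2*b))
    rw [h0] at heq
    linarith [heq ▸ hpos]
  · have hge : (kbar:ℝ)/M0 ≤ dFun a b := by
      show (kbar:ℝ)/M0 ≤ sInf {l : ℝ | 0 < l ∧ ∀ k : ℕ, Nseq 1 a k ≤ l * Mseq 1 b k}
      refine le_csInf hD ?_
      rintro l ⟨hl0, hl⟩
      rw [div_le_iff₀ hM00]
      have h1 := hl kbar
      have h2 : l * Mseq 1 b kbar ≤ l * M0 := mul_le_mul_of_nonneg_left hMseq hl0.le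
      linarith
    have hlt2 : Real.sqrt (a/(2*b)) < (kbar:ℝ)/M0 := by
      rw [Real.sqrt_lt' (by positivity)]
      rw [div_lt_iff₀ (by positivity : (0:ℝ) < 2*b)] at *
      nlinarith [hlt]
    rw [heq] at hge
    linarith

set_option maxHeartbeats 1000000 in
theorem Vfun_lower_bound (b : ℝ) (hb : 1 ≤ b) :
    2 * b * ((2 * (⌊b⌋ : ℝ) + 2 * (⌈Real.sqrt (2 * b) + Int.fract b⌉ : ℝ) - 1) /
        (b + (⌊b⌋ : ℝ) + (⌈Real.sqrt (2 * b) + Int.fract b⌉ : ℝ) - 1)) ^ 2 ≤ Vfun b := by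
  have hb0 : (0:ℝ) < b := by linarith
  set x := Real.sqrt (2 * b) + Int.fract b with hx_def
  have hsq : Real.sqrt (2*b)^2 = 2*b := Real.sq_sqrt (by linarith)
  have hs1 : 1 ≤ Real.sqrt (2*b) := by
    rw [show (1:ℝ) = Real.sqrt 1 by simp]
    exact Real.sqrt_le_sqrt (by linarith)
  have hfr0 : 0 ≤ Int.fract b := Int.fract_nonneg b
  have hfr1 : Int.fract b < 1 := Int.fract_lt_one b
  have hx0 : 0 < x := by rw [hx_def]; linarith
  have hfl1 : (1:ℤ) ≤ ⌊b⌋ := Int.le_floor.2 (by push_cast; linarith)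
  set P : ℕ := ⌊b⌋.toNat with hP_def
  have hPZ : (P:ℤ) = ⌊b⌋ := Int.toNat_of_nonneg (by omega)
  have hPcast : (P:ℝ) = (⌊b⌋:ℝ) := by exact_mod_cast congrArg (fun z : ℤ => (z:ℝ)) hPZ
  have hP1 : 1 ≤ P := by omega
  have hc1 : (1:ℤ) ≤ ⌈x⌉ := Int.ceil_pos.2 hx0
  set Q : ℕ := ⌈x⌉.toNat with hQ_def
  have hQZ : (Q:ℤ) = ⌈x⌉ := Int.toNat_of_nonneg (by omega)
  have hQcast : (Q:ℝ) = (⌈x⌉:ℝ) := by exact_mod_cast congrArg (fun z : ℤ => (z:ℝ)) hQZ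
  have hQ1 : 1 ≤ Q := by omega
  set kbar : ℕ := 2*P + 2*Q - 1 with hk_def
  have hk1 : 1 ≤ kbar := by omega
  have hkcast : (kbar:ℝ) = 2*(P:ℝ) + 2*(Q:ℝ) - 1 := by
    rw [hk_def, Nat.cast_sub (by omega : 1 ≤ 2*P+2*Q)]
    push_cast
    ring
  set M0 : ℝ := b + (P:ℝ) + (Q:ℝ) - 1 with hM0_def
  have hPR : (1:ℝ) ≤ (P:ℝ) := by exact_mod_cast hP1
  have hQR : (1:ℝ) ≤ (Q:ℝ) := by exact_mod_cast hQ1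
  have hM01 : 1 ≤ M0 := by rw [hM0_def]; linarith
  have hMseq : Mseq 1 b kbar ≤ M0 := by
    have hmQ : kbar + 1 ≤ ((P + Q - 1) + 1) * (1 + 1) := by omega
    have h := Mseq_le' b hb0 kbar (P + Q - 1) 1 hmQ
    have hcast : ((P + Q - 1 : ℕ):ℝ) = (P:ℝ) + Q - 1 := by
      rw [Nat.cast_sub (by omega)]
      push_cast
      ring
    rw [hcast] at h
    calc Mseq 1 b kbar ≤ ((P:ℝ) + Q - 1)*1 + ((1:ℕ):ℝ)*b := h
      _ = M0 := by rw [hM0_def]; push_cast; ring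
  have hbf : (⌊b⌋:ℝ) + Int.fract b = b := Int.floor_add_fract b
  have hceil1 : x ≤ (⌈x⌉:ℝ) := Int.le_ceil x
  have hceil2 : (⌈x⌉:ℝ) < x + 1 := Int.ceil_lt_add_one x
  have hkey : (b - ((P:ℝ) + Q - 1))^2 < 2*b := by
    rw [hPcast, hQcast]
    have h1 : 0 < Real.sqrt (2*b) + (b - ((⌊b⌋:ℝ) + (⌈x⌉:ℝ) - 1)) := by
      rw [hx_def] at hceil2
      linarith
    have h2 : 0 < Real.sqrt (2*b) - (b - ((⌊b⌋:ℝ) + (⌈x⌉:ℝ) - 1)) := by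
      rw [hx_def] at hceil1
      linarith
    nlinarith [mul_pos h1 h2, hsq]
  have hkpos : (0:ℝ) < (kbar:ℝ) := by exact_mod_cast hk1
  have hM00 : (0:ℝ) < M0 := by linarith
  have hkb : (kbar:ℝ) < 2*b*((kbar:ℝ)/M0)^2 := by
    have hexp : 2*b*((kbar:ℝ)/M0)^2 = 2*b*(kbar:ℝ)^2/M0^2 := by
      field_simp
    rw [hexp, lt_div_iff₀ (by positivity)]
    have hfact : 0 < 2*b*(kbar:ℝ) - M0^2 := by
      rw [hkcast, hM0_def]
      nlinarith [hkey]
    nlinarith [mul_pos hkpos hfact]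
  have hLHS : 2 * b * ((2 * (⌊b⌋ : ℝ) + 2 * ((⌈x⌉:ℤ) : ℝ) - 1) /
        (b + (⌊b⌋ : ℝ) + ((⌈x⌉:ℤ) : ℝ) - 1)) ^ 2
      = 2*b*((kbar:ℝ)/M0)^2 := by
    rw [hkcast, hM0_def, hPcast, hQcast]
  rw [hLHS]
  show 2*b*((kbar:ℝ)/M0)^2
      ≤ sInf {A : ℝ | ∀ a : ℝ, A ≤ a → dFun a b = Real.sqrt (a / (2 * b))}
  refine le_csInf ⟨32*b, fun a' ha' => dFun_eq_of_large a' b hb ha'⟩ ?_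
  intro A hA
  by_contra hcon
  push_neg at hcon
  have h1 : A ≤ max A (((kbar:ℝ) + 2*b*((kbar:ℝ)/M0)^2)/2) := le_max_left _ _
  have heq := hA _ h1
  refine counterexample b _ hb kbar M0 hM01 hMseq hk1 ?_ ?_ heq
  · exact le_trans (by linarith : (kbar:ℝ) ≤ ((kbar:ℝ) + 2*b*((kbar:ℝ)/M0)^2)/2)
      (le_max_right _ _)
  · exact max_lt hcon (by linarith)
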